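/- Let G be a 3-edge-connected graph and let G_v be a 3-edge-connected local cubic modification of G at a vertex v. Then F(G_v) ≥ F(G), i.e., the Frank number cannot decrease under local cubic modification. -/

import Mathlib

/-!
Contracting the new cycle of `G_v` back to `v` sends every other edge of `G_v` to a distinct edge
of `G` and covers every edge of `G`. So a strongly connected orientation of `G_v` induces one of
`G`, and an edge of `G_v` that is deletable there has a deletable image. A family of `F(G_v)`
orientations of `G_v` witnessing its Frank number therefore induces such a family for `G`.

Such a family exists (the infimum defining `F(G_v)` is attained) because `G_v` is
3-edge-connected: for any edge `ab`, Robbins' theorem applied to the 2-edge-connected graph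
`G_v - ab` gives a strong orientation in which `ab` is deletable.
Robbins' theorem is proved by ear growth: a strongly connected set `S` with a boundary edge `xy`
extends along a walk from `y` back to `S` avoiding `xy`, which exists as `xy` is not a bridge.
-/

namespace Frank

variable {V : Type*}

/-- An orientation of a simple graph `G`: each edge gets exactly one direction. -/
structure Orient (G : SimpleGraph V) where
  dir : V → V → Prop
  dir_iff : ∀ u v, (dir u v ∨ dir v u) ↔ G.Adj u v
  not_both : ∀ u v, dir u v → ¬ dir v u

/-- A relation (digraph) is strongly connected. -/
def IsStrong (r : V → V → Prop) : Prop :=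
  ∀ x y : V, Relation.ReflTransGen r x y

/-- Delete the single arc `(u,v)` from the digraph `r`. -/
def delArc (r : V → V → Prop) (u v : V) : V → V → Prop :=
  fun a b => r a b ∧ ¬(a = u ∧ b = v)

/-- Delete (both possible arcs of) the edge `uv` from the digraph `r`. -/
def delEdge (r : V → V → Prop) (u v : V) : V → V → Prop :=
  fun a b => r a b ∧ ¬((a = u ∧ b = v) ∨ (a = v ∧ b = u))

/-- The edge `uv` is deletable in the orientation `O`: after removing its arc the
orientation stays strongly connected. -/
def EdgeDeletable {G : SimpleGraph V} (O : Orient G) (u v : V) : Prop :=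
  IsStrong (delEdge O.dir u v)

/-- The Frank number of `G`: the least `k` admitting `k` strongly connected orientations
such that every edge is deletable in at least one of them. -/
noncomputable def frankNumber (G : SimpleGraph V) : ℕ :=
  sInf {k | ∃ Os : Fin k → Orient G, (∀ i, IsStrong (Os i).dir) ∧
    ∀ u v, G.Adj u v → ∃ i, EdgeDeletable (Os i) u v}

/-- `G` is 2-edge-connected: connected and stays connected after deleting any single edge. -/
def TwoEdgeConn (G : SimpleGraph V) : Prop :=
  G.Connected ∧ ∀ e : Sym2 V, (G.deleteEdges {e}).Connected

/-- `G` is 3-edge-connected: connected and stays connected after deleting any two edges. -/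
def ThreeEdgeConn (G : SimpleGraph V) : Prop :=
  G.Connected ∧ ∀ e f : Sym2 V, (G.deleteEdges {e, f}).Connected

/-- The underlying relation of the local cubic modification of `G` at `v`:
`v` is replaced by a cycle on `ZMod d`, and `m` matches the cycle vertices to
the former neighbours of `v`. -/
def lcmRel (G : SimpleGraph V) (v : V) (d : ℕ) (m : ZMod d → V) :
    ({w : V // w ≠ v} ⊕ ZMod d) → ({w : V // w ≠ v} ⊕ ZMod d) → Prop
  | Sum.inl w, Sum.inl w' => G.Adj w.1 w'.1
  | Sum.inl w, Sum.inr i => w.1 = m i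
  | Sum.inr i, Sum.inr j => j = i + 1
  | Sum.inr _, Sum.inl _ => False

/-- The local cubic modification `G_v(M)` of `G` at `v` given the matching `m`. -/
def localCubicMod (G : SimpleGraph V) (v : V) (d : ℕ) (m : ZMod d → V) :
    SimpleGraph ({w : V // w ≠ v} ⊕ ZMod d) :=
  SimpleGraph.fromRel (lcmRel G v d m)

open Relation

variable {W : Type*} {G : SimpleGraph V}

theorem IsStrong.mono {r s : V → V → Prop} (hrs : r ≤ s) (hr : IsStrong r) : IsStrong s :=
  fun x y => ReflTransGen.mono hrs _ _ (hr x y)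

theorem IsStrong.of_surjective {R : W → W → Prop} {P : V → V → Prop} {f : W → V}
    (hf : Function.Surjective f) (hRP : ∀ a b, R a b → f a ≠ f b → P (f a) (f b))
    (hR : IsStrong R) : IsStrong P := by
  intro u w
  obtain ⟨a, rfl⟩ := hf u
  obtain ⟨b, rfl⟩ := hf w
  refine ReflTransGen.lift' f (fun c d hcd => ?_) _ _ (hR a b)
  by_cases hfcd : f c = f d
  · rw [Function.onFun, hfcd]
  · exact .single (hRP c d hcd hfcd)

theorem Orient.adj {O : Orient G} {a b : V} (h : O.dir a b) : G.Adj a b :=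
  (O.dir_iff a b).mp (Or.inl h)

theorem exists_orient_ge {r : V → V → Prop} (hadj : r ≤ G.Adj)
    (hasymm : ∀ a b, r a b → ¬ r b a) : ∃ O : Orient G, r ≤ O.dir := by
  let _ : LinearOrder V := IsWellOrder.linearOrder WellOrderingRel
  refine ⟨⟨fun a b => r a b ∨ (G.Adj a b ∧ ¬ r b a ∧ a < b),
    fun a b => ⟨?_, fun hab => ?_⟩, ?_⟩, fun a b => Or.inl⟩
  · rintro ((h | ⟨h, -⟩) | (h | ⟨h, -⟩))
    exacts [hadj a b h, h, (hadj b a h).symm, h.symm]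
  · by_cases hr : r a b ∨ r b a
    · exact hr.imp Or.inl Or.inl
    rw [not_or] at hr
    rcases (G.ne_of_adj hab).lt_or_gt with hlt | hlt
    exacts [Or.inl (Or.inr ⟨hab, hr.2, hlt⟩), Or.inr (Or.inr ⟨hab.symm, hr.1, hlt⟩)]
  · rintro a b (hab | ⟨-, hba, hlt⟩) (hba' | ⟨-, hab', hlt'⟩)
    exacts [hasymm a b hab hba', hab' hab, hba hba', lt_asymm hlt hlt']

def arcsOf {u w : V} (p : G.Walk u w) (a b : V) : Prop :=
  ∃ e ∈ p.darts, e.fst = a ∧ e.snd = b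

theorem reflTransGen_of_walk {R : V → V → Prop} {a b : V} (p : G.Walk a b)
    (hp : arcsOf p ≤ R) : ReflTransGen R a b := by
  induction p with
  | nil => exact .refl
  | cons h q ih =>
    exact .head (hp _ _ ⟨_, List.mem_cons_self .., rfl, rfl⟩)
      (ih fun c d ⟨e, he, hc, hd⟩ => hp c d ⟨e, List.mem_cons_of_mem _ he, hc, hd⟩)

theorem reflTransGen_arcsOf_of_mem_support {a b u : V} (p : G.Walk a b) (hu : u ∈ p.support) :
    ReflTransGen (arcsOf p) a u ∧ ReflTransGen (arcsOf p) u b := by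
  classical
  exact ⟨reflTransGen_of_walk (p.takeUntil u hu) fun c d ⟨e, he, hc, hd⟩ =>
      ⟨e, p.darts_takeUntil_subset_darts hu he, hc, hd⟩,
    reflTransGen_of_walk (p.dropUntil u hu) fun c d ⟨e, he, hc, hd⟩ =>
      ⟨e, p.darts_dropUntil_subset_darts hu he, hc, hd⟩⟩

theorem arcsOf_asymm_of_isTrail {a b u w : V} {p : G.Walk u w} (hp : p.IsTrail)
    (hab : arcsOf p a b) : ¬ arcsOf p b a := by
  rintro ⟨e', he', rfl, rfl⟩
  obtain ⟨e, he, hea, heb⟩ := hab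
  have : e = e' := List.inj_on_of_nodup_map hp.edges_nodup he he' <| by
    simp [SimpleGraph.Dart.edge, hea, heb, Sym2.eq_swap]
  subst this
  exact e.adj.ne hea

theorem exists_isPath_to_set {S : Set V} {y x : V} (p : G.Walk y x)
    (hx : x ∈ S) : ∃ s ∈ S, ∃ q : G.Walk y s,
      q.IsPath ∧ q.edges ⊆ p.edges ∧ ∀ e ∈ q.darts, e.fst ∉ S := by
  classical
  induction p with
  | nil => exact ⟨_, hx, .nil, .nil, by simp, by simp⟩
  | @cons y z x h p ih =>
    by_cases hy : y ∈ S
    · exact ⟨y, hy, .nil, .nil, by simp, by simp⟩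
    obtain ⟨s, hs, q, -, hqp, hqS⟩ := ih hx
    refine ⟨s, hs, (q.cons h).bypass, (q.cons h).bypass_isPath, ?_, ?_⟩
    · exact fun e he => by
        simpa using List.cons_subset_cons _ hqp ((q.cons h).edges_bypass_subset_edges he)
    · intro e he
      obtain rfl | he := List.mem_cons.mp ((q.cons h).darts_bypass_subset_darts he)
      exacts [hy, hqS e he]

structure IsStrongOn (G : SimpleGraph V) (r : V → V → Prop) (S : Set V) : Prop where
  adj : r ≤ G.Adj
  asymm : ∀ a b, r a b → ¬ r b a
  mem : ∀ a b, r a b → a ∈ S ∧ b ∈ S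
  reach : ∀ a ∈ S, ∀ b ∈ S, ReflTransGen r a b

theorem IsStrongOn.union_support {r : V → V → Prop} {S : Set V} (h : IsStrongOn G r S)
    {x s : V} (c : G.Walk x s) (hc : c.IsTrail) (hx : x ∈ S) (hs : s ∈ S)
    (hcS : ∀ e ∈ c.darts, e.fst ∉ S ∨ e.snd ∉ S) :
    IsStrongOn G (r ⊔ arcsOf c) (S ∪ {u | u ∈ c.support}) := by
  have lift_r : ∀ {a b}, ReflTransGen r a b → ReflTransGen (r ⊔ arcsOf c) a b :=
    ReflTransGen.mono le_sup_left _ _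
  have reach_through : ∀ u ∈ S ∪ {u | u ∈ c.support},
      ReflTransGen (r ⊔ arcsOf c) x u ∧ ReflTransGen (r ⊔ arcsOf c) u s := by
    rintro u (hu | hu)
    · exact ⟨lift_r (h.reach x hx u hu), lift_r (h.reach u hu s hs)⟩
    · obtain ⟨hxu, hus⟩ := reflTransGen_arcsOf_of_mem_support c hu
      exact ⟨ReflTransGen.mono le_sup_right _ _ hxu, ReflTransGen.mono le_sup_right _ _ hus⟩
  refine ⟨?_, ?_, ?_, fun a ha b hb => ?_⟩
  · rintro a b (hab | ⟨e, -, rfl, rfl⟩)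
    exacts [h.adj a b hab, e.adj]
  · rintro a b (hab | hab) (hba | hba)
    · exact h.asymm a b hab hba
    · obtain ⟨e, he, rfl, rfl⟩ := hba
      exact (hcS e he).elim (· (h.mem _ _ hab).2) (· (h.mem _ _ hab).1)
    · obtain ⟨e, he, rfl, rfl⟩ := hab
      exact (hcS e he).elim (· (h.mem _ _ hba).2) (· (h.mem _ _ hba).1)
    · exact arcsOf_asymm_of_isTrail hc hab hba
  · rintro a b (hab | ⟨e, he, rfl, rfl⟩)
    · exact (h.mem a b hab).imp Or.inl Or.inl
    · exact ⟨Or.inr (c.dart_fst_mem_support_of_mem_darts he),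
        Or.inr (c.dart_snd_mem_support_of_mem_darts he)⟩
  · exact (reach_through a ha).2.trans <|
      (lift_r (h.reach s hs x hx)).trans (reach_through b hb).1

theorem IsStrongOn.exists_ssuperset (hG : TwoEdgeConn G) {r : V → V → Prop} {S : Set V}
    (h : IsStrongOn G r S) {x y : V} (hx : x ∈ S) (hy : y ∉ S) (hxy : G.Adj x y) :
    ∃ r' S', IsStrongOn G r' S' ∧ S ⊂ S' := by
  obtain ⟨p, hp⟩ := SimpleGraph.reachable_deleteEdges_iff_exists_walk.mp
    ((hG.2 s(x, y)).preconnected y x)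
  obtain ⟨s, hs, q, hq, hqp, hqS⟩ := exists_isPath_to_set p hx
  let c := q.cons hxy
  have hc : c.IsTrail :=
    (SimpleGraph.Walk.isTrail_cons _ _).mpr ⟨hq.isTrail, fun h => hp (hqp h)⟩
  have hcS : ∀ e ∈ c.darts, e.fst ∉ S ∨ e.snd ∉ S := by
    rintro e (_ | ⟨_, he⟩)
    exacts [Or.inr hy, Or.inl (hqS e he)]
  refine ⟨_, _, h.union_support c hc hx hs hcS,
    (Set.ssubset_iff_of_subset Set.subset_union_left).mpr ⟨y, Or.inr ?_, hy⟩⟩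
  simp [c]

theorem TwoEdgeConn.exists_orient_isStrong [Finite V] (hG : TwoEdgeConn G) :
    ∃ O : Orient G, IsStrong O.dir := by
  obtain ⟨v₀⟩ := hG.1.nonempty
  obtain ⟨S, hmax⟩ :=
    (Set.toFinite {S : Set V | ∃ r, IsStrongOn G r S ∧ v₀ ∈ S}).exists_maximal
      ⟨{v₀}, ⊥, ⟨fun _ _ => False.elim, fun _ _ => False.elim, fun _ _ => False.elim,
        fun a ha b hb => by rw [ha, hb]⟩, rfl⟩
  obtain ⟨r, hr, hv₀⟩ := hmax.prop
  have hS : S = Set.univ := by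
    refine Set.eq_univ_of_forall fun y => by_contra fun hy => ?_
    obtain ⟨p⟩ := hG.1.preconnected v₀ y
    obtain ⟨e, -, he, he'⟩ := p.exists_boundary_dart S hv₀ hy
    obtain ⟨r', S', hr', hSS'⟩ := hr.exists_ssuperset hG he he' e.adj
    exact hmax.not_ssuperset ⟨r', hr', hSS'.subset hv₀⟩ hSS'
  obtain ⟨O, hO⟩ := exists_orient_ge hr.adj hr.asymm
  exact ⟨O, fun a b =>
    ReflTransGen.mono hO _ _ (hr.reach a (hS ▸ Set.mem_univ a) b (hS ▸ Set.mem_univ b))⟩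

theorem ThreeEdgeConn.twoEdgeConn_deleteEdges (hG : ThreeEdgeConn G) (e : Sym2 V) :
    TwoEdgeConn (G.deleteEdges {e}) := by
  refine ⟨by simpa using hG.2 e e, fun f => ?_⟩
  rw [SimpleGraph.deleteEdges_deleteEdges, Set.singleton_union]
  exact hG.2 e f

theorem ThreeEdgeConn.exists_orient_edgeDeletable [Finite V] (hG : ThreeEdgeConn G) (a b : V) :
    ∃ O : Orient G, IsStrong O.dir ∧ EdgeDeletable O a b := by
  obtain ⟨O', hO'⟩ := (hG.twoEdgeConn_deleteEdges s(a, b)).exists_orient_isStrong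
  obtain ⟨O, hO⟩ := exists_orient_ge (r := O'.dir) (fun x y h => (O'.adj h).1) O'.not_both
  refine ⟨O, hO'.mono hO, hO'.mono fun x y h => ⟨hO x y h, fun hxy => ?_⟩⟩
  have hne := ((SimpleGraph.deleteEdges_adj ..).mp (O'.adj h)).2
  simp only [Set.mem_singleton_iff, Sym2.eq_iff] at hne
  exact hne hxy

def FrankFamily (G : SimpleGraph V) (k : ℕ) : Prop :=
  ∃ Os : Fin k → Orient G, (∀ i, IsStrong (Os i).dir) ∧
    ∀ u w, G.Adj u w → ∃ i, EdgeDeletable (Os i) u w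

theorem ThreeEdgeConn.frankFamily_frankNumber [Finite V] (hG : ThreeEdgeConn G) :
    FrankFamily G (frankNumber G) := by
  choose O hO using fun p : V × V => hG.exists_orient_edgeDeletable p.1 p.2
  let e := Finite.equivFin (V × V)
  refine Nat.sInf_mem (s := {k | FrankFamily G k})
    ⟨Nat.card (V × V), fun i => O (e.symm i), fun i => (hO _).1,
      fun u w _ => ⟨e (u, w), ?_⟩⟩
  simpa using (hO (u, w)).2

/-- `G` arises from `G'` by contracting the edges that `f` collapses: every other edge of `G'`
maps to its own edge of `G`. -/
structure IsContractionMap (G' : SimpleGraph W) (G : SimpleGraph V) (f : W → V) : Prop where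
  surjective : Function.Surjective f
  adj_of_adj : ∀ a b, G'.Adj a b → f a ≠ f b → G.Adj (f a) (f b)
  exists_adj : ∀ u w, G.Adj u w → ∃ a b, G'.Adj a b ∧ f a = u ∧ f b = w
  eq_of_adj : ∀ a b a' b', G'.Adj a b → G'.Adj a' b' → f a ≠ f b → f a = f a' → f b = f b' →
    a = a'

namespace IsContractionMap

variable {G' : SimpleGraph W} {f : W → V}

theorem eq_and_eq_of_adj (hf : IsContractionMap G' G f) {a b a' b' : W} (hab : G'.Adj a b)
    (hab' : G'.Adj a' b') (hne : f a ≠ f b) (ha : f a = f a') (hb : f b = f b') :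
    a = a' ∧ b = b' :=
  ⟨hf.eq_of_adj a b a' b' hab hab' hne ha hb,
    hf.eq_of_adj b a b' a' hab.symm hab'.symm hne.symm hb ha⟩

def orient (hf : IsContractionMap G' G f) (O : Orient G') : Orient G where
  dir u w := u ≠ w ∧ Relation.Map O.dir f f u w
  dir_iff u w := by
    refine ⟨?_, fun h => ?_⟩
    · rintro (⟨hne, a, b, hab, rfl, rfl⟩ | ⟨hne, a, b, hab, rfl, rfl⟩)
      exacts [hf.adj_of_adj a b (Orient.adj hab) hne,
        (hf.adj_of_adj a b (Orient.adj hab) hne).symm]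
    · obtain ⟨a, b, hab, rfl, rfl⟩ := hf.exists_adj u w h
      rcases (O.dir_iff a b).mpr hab with h' | h'
      exacts [Or.inl ⟨h.ne, a, b, h', rfl, rfl⟩, Or.inr ⟨h.ne.symm, b, a, h', rfl, rfl⟩]
  not_both := by
    rintro u w ⟨hne, a, b, hab, rfl, rfl⟩ ⟨-, b', a', hba, hb, ha⟩
    obtain ⟨rfl, rfl⟩ :=
      hf.eq_and_eq_of_adj (Orient.adj hab) (Orient.adj hba).symm hne ha.symm hb.symm
    exact O.not_both a b hab hba

theorem isStrong_orient (hf : IsContractionMap G' G f) {O : Orient G'} (hO : IsStrong O.dir) :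
    IsStrong (hf.orient O).dir :=
  hO.of_surjective hf.surjective fun a b hab hne => ⟨hne, a, b, hab, rfl, rfl⟩

theorem edgeDeletable_orient (hf : IsContractionMap G' G f) {O : Orient G'} {a b : W}
    (hab : G'.Adj a b) (hO : EdgeDeletable O a b) : EdgeDeletable (hf.orient O) (f a) (f b) := by
  refine hO.of_surjective hf.surjective fun c d ⟨hcd, hne⟩ hf_ne =>
    ⟨⟨hf_ne, c, d, hcd, rfl, rfl⟩, ?_⟩
  rintro (⟨hc, hd⟩ | ⟨hc, hd⟩)
  · exact hne (Or.inl (hf.eq_and_eq_of_adj (Orient.adj hcd) hab hf_ne hc hd))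
  · exact hne (Or.inr (hf.eq_and_eq_of_adj (Orient.adj hcd) hab.symm hf_ne hc hd))

theorem frankNumber_le [Finite W] (hf : IsContractionMap G' G f) (hG' : ThreeEdgeConn G') :
    frankNumber G ≤ frankNumber G' := by
  obtain ⟨Os, hstrong, hdel⟩ := hG'.frankFamily_frankNumber
  refine Nat.sInf_le (s := {k | FrankFamily G k})
    ⟨fun i => hf.orient (Os i), fun i => hf.isStrong_orient (hstrong i), fun u w huw => ?_⟩
  obtain ⟨a, b, hab, rfl, rfl⟩ := hf.exists_adj u w huw
  obtain ⟨i, hi⟩ := hdel a b hab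
  exact ⟨i, hf.edgeDeletable_orient hab hi⟩

end IsContractionMap

section LocalCubicMod

variable {v : V} {d : ℕ} {m : ZMod d → V}

@[simp]
theorem localCubicMod_adj_inl_inl {a b : {w : V // w ≠ v}} :
    (localCubicMod G v d m).Adj (.inl a) (.inl b) ↔ G.Adj a b := by
  simp only [localCubicMod, SimpleGraph.fromRel_adj, lcmRel, SimpleGraph.adj_comm G b.1, or_self]
  exact ⟨And.right, fun h => ⟨fun hab => G.ne_of_adj h (by rw [Sum.inl_injective hab]), h⟩⟩

@[simp]
theorem localCubicMod_adj_inl_inr {a : {w : V // w ≠ v}} {i : ZMod d} :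
    (localCubicMod G v d m).Adj (.inl a) (.inr i) ↔ a.1 = m i := by
  simp [localCubicMod, lcmRel]

@[simp]
theorem localCubicMod_adj_inr_inl {a : {w : V // w ≠ v}} {i : ZMod d} :
    (localCubicMod G v d m).Adj (.inr i) (.inl a) ↔ a.1 = m i := by
  simp [localCubicMod, lcmRel]

def contractCycle (v : V) (d : ℕ) : {w : V // w ≠ v} ⊕ ZMod d → V :=
  Sum.elim Subtype.val fun _ => v

theorem eq_inl_of_contractCycle_eq {a : {w : V // w ≠ v}} {x : {w : V // w ≠ v} ⊕ ZMod d}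
    (h : contractCycle v d x = a) : x = .inl a := by
  rcases x with b | i
  exacts [congrArg Sum.inl (Subtype.ext h), absurd h.symm a.2]

theorem isContractionMap_contractCycle (hm : Function.Injective m)
    (hr : Set.range m = G.neighborSet v) :
    IsContractionMap (localCubicMod G v d m) G (contractCycle v d) := by
  have hadj : ∀ {w}, G.Adj v w ↔ ∃ i, m i = w := fun {w} => by
    rw [← SimpleGraph.mem_neighborSet, ← hr, Set.mem_range]
  refine ⟨fun u => ?_, ?_, fun u w huw => ?_, ?_⟩
  · by_cases hu : u = v
    exacts [⟨.inr 0, hu.symm⟩, ⟨.inl ⟨u, hu⟩, rfl⟩]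
  · rintro (a | i) (b | j) hab hne
    · exact localCubicMod_adj_inl_inl.mp hab
    · exact (hadj.mpr ⟨j, (localCubicMod_adj_inl_inr.mp hab).symm⟩).symm
    · exact hadj.mpr ⟨i, (localCubicMod_adj_inr_inl.mp hab).symm⟩
    · exact absurd rfl hne
  · by_cases hu : u = v
    · subst hu
      obtain ⟨i, rfl⟩ := hadj.mp huw
      exact ⟨.inr i, .inl ⟨m i, huw.ne.symm⟩, by simp, rfl, rfl⟩
    by_cases hw : w = v
    · subst hw
      obtain ⟨i, rfl⟩ := hadj.mp huw.symm
      exact ⟨.inl ⟨m i, hu⟩, .inr i, by simp, rfl, rfl⟩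
    exact ⟨.inl ⟨u, hu⟩, .inl ⟨w, hw⟩, by simpa using huw, rfl, rfl⟩
  · rintro (a | i) b a' b' hab hab' hne ha hb
    · exact (eq_inl_of_contractCycle_eq ha.symm).symm
    obtain ⟨w, rfl⟩ : ∃ w, b = .inl w := by
      rcases b with w | j
      exacts [⟨w, rfl⟩, absurd rfl hne]
    obtain ⟨i', rfl⟩ : ∃ i', a' = .inr i' := by
      rcases a' with w' | i'
      exacts [absurd ha.symm w'.2, ⟨i', rfl⟩]
    obtain rfl := eq_inl_of_contractCycle_eq hb.symm
    rw [localCubicMod_adj_inr_inl] at hab hab'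
    exact congrArg Sum.inr (hm (hab.symm.trans hab'))

end LocalCubicMod

theorem stmt_11_general [Fintype V] (G : SimpleGraph V) (v : V) (d : ℕ)
    (m : ZMod d → V) (hm : Function.Injective m)
    (hr : Set.range m = G.neighborSet v)
    (h3v : ThreeEdgeConn (localCubicMod G v d m)) :
    frankNumber G ≤ frankNumber (localCubicMod G v d m) := by
  -- `ZMod 0 = ℤ`, so finiteness of the cycle has to come from `m`.
  have : Finite (ZMod d) := Finite.of_injective m hm
  exact (isContractionMap_contractCycle hm hr).frankNumber_le h3v

theorem stmt_11 [Fintype V] (G : SimpleGraph V) (h3 : ThreeEdgeConn G) (v : V) (d : ℕ)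
    (hd3 : 3 ≤ d) (m : ZMod d → V) (hm : Function.Injective m)
    (hr : Set.range m = G.neighborSet v)
    (h3v : ThreeEdgeConn (localCubicMod G v d m)) :
    frankNumber G ≤ frankNumber (localCubicMod G v d m) :=
  stmt_11_general G v d m hm hr h3v

end Frank
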